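/- Let N, κ, M, M₀ be natural numbers with κ ≥ 1, 8κ ≤ N, M ≥ 7N/8, max(M₀, M−M₀) ≤ 2N/3, and κ ≤ min(M₀, M−M₀). Then for every bitstring b ∈ {0,1}^κ, the probability assigned to b by D^WOR_{(M,M₀,κ)} is at most (8/9)^κ. -/

import Mathlib

/-- The probability assigned to a bitstring `b` of length `K` by the distribution
`D^WOR_{(M,M₀,K)}`. -/
def dwor (M M₀ K : ℕ) (b : Fin K → Bool) : ℚ :=
  (∏ j ∈ Finset.range K, 1 / ((M : ℚ) - j)) *
    (∏ j ∈ Finset.range (Finset.univ.filter fun i => b i = false).card,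
      ((M₀ : ℚ) - j)) *
    (∏ j ∈ Finset.range (Finset.univ.filter fun i => b i = true).card,
      ((M : ℚ) - (M₀ : ℚ) - j))

/-!
There are `κ` denominator factors `M - j`, each at least `M - κ ≥ 3N/4`, and `κ` numerator factors
in total, each at most `max(M₀, M - M₀) ≤ 2N/3`; hence the probability is at most
`((2N/3) / (3N/4))^κ = (8/9)^κ`.
-/

open Finset

section FallingProduct

variable {R : Type*} [CommRing R] [LinearOrder R] [IsStrictOrderedRing R] {a c : R} {k : ℕ}

lemma le_sub_of_mem_range (h : c + k ≤ a) {j : ℕ} (hj : j ∈ range k) : c ≤ a - j := by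
  have : (j : R) ≤ k := by exact_mod_cast (mem_range.mp hj).le
  linarith

lemma prod_range_sub_nonneg (hk : (k : R) ≤ a) : 0 ≤ ∏ j ∈ range k, (a - j) :=
  prod_nonneg fun _ hj => le_sub_of_mem_range ((zero_add _).trans_le hk) hj

lemma prod_range_sub_le_pow (hk : (k : R) ≤ a) (hc : a ≤ c) :
    ∏ j ∈ range k, (a - j) ≤ c ^ k :=
  (prod_le_prod (fun _ hj => le_sub_of_mem_range ((zero_add _).trans_le hk) hj)
    fun j _ => (sub_le_self a j.cast_nonneg).trans hc).trans_eq (pow_eq_prod_const c k).symm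

lemma pow_le_prod_range_sub (hc : 0 ≤ c) (hk : c + k ≤ a) :
    c ^ k ≤ ∏ j ∈ range k, (a - j) :=
  (pow_eq_prod_const c k).trans_le <|
    prod_le_prod (fun _ _ => hc) fun _ hj => le_sub_of_mem_range hk hj

end FallingProduct

lemma card_filter_false_add_card_filter_true {K : ℕ} (b : Fin K → Bool) :
    #{i | b i = false} + #{i | b i = true} = K := by
  simpa using card_filter_add_card_filter_not (s := univ) fun i => b i = false

lemma dwor_eq_div (M M₀ K : ℕ) (b : Fin K → Bool) : dwor M M₀ K b =
    (∏ j ∈ range #{i | b i = false}, ((M₀ : ℚ) - j)) *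
      (∏ j ∈ range #{i | b i = true}, ((M : ℚ) - M₀ - j)) / ∏ j ∈ range K, ((M : ℚ) - j) := by
  rw [dwor, div_eq_inv_mul, ← prod_inv_distrib]
  simp only [one_div, mul_assoc]

lemma dwor_le_div_pow {M M₀ K : ℕ} {c d : ℚ} (hK₀ : K ≤ M₀) (hK₁ : K + M₀ ≤ M)
    (hc₀ : M₀ ≤ c) (hc₁ : (M : ℚ) - M₀ ≤ c) (hd : 0 < d) (hdM : d + K ≤ M)
    (b : Fin K → Bool) : dwor M M₀ K b ≤ (c / d) ^ K := by
  have hk₀ : (#{i | b i = false} : ℚ) ≤ M₀ := by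
    have := card_filter_false_add_card_filter_true b
    exact_mod_cast (by omega : #{i | b i = false} ≤ M₀)
  have hk₁ : (#{i | b i = true} : ℚ) ≤ M - M₀ := by
    have := card_filter_false_add_card_filter_true b
    rw [le_sub_iff_add_le]; exact_mod_cast (by omega : #{i | b i = true} + M₀ ≤ M)
  have hc : 0 ≤ c := (Nat.cast_nonneg M₀).trans hc₀
  have hnum : (∏ j ∈ range #{i | b i = false}, ((M₀ : ℚ) - j)) *
      (∏ j ∈ range #{i | b i = true}, ((M : ℚ) - M₀ - j)) ≤ c ^ K :=
    calc _ ≤ c ^ #{i | b i = false} * c ^ #{i | b i = true} :=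
          mul_le_mul (prod_range_sub_le_pow hk₀ hc₀) (prod_range_sub_le_pow hk₁ hc₁)
            (prod_range_sub_nonneg hk₁) (pow_nonneg hc _)
      _ = c ^ K := by rw [← pow_add, card_filter_false_add_card_filter_true]
  rw [dwor_eq_div, div_pow]
  exact div_le_div₀ (pow_nonneg hc K) hnum (pow_pos hd K) (pow_le_prod_range_sub hd.le hdM)

/-- Quantitative content of Lemma 1 (first statement): if `κ ≥ 1`, `8κ ≤ N`,
`M ≥ 7N/8`, `max(M₀, M - M₀) ≤ 2N/3` and `κ ≤ min(M₀, M - M₀)`, then every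
bitstring of length `κ` has probability at most `(8/9)^κ` under
`D^WOR_{(M,M₀,κ)}`. -/
theorem stmt_7 (N κ M M₀ : ℕ) (hκ : 1 ≤ κ) (hN : 8 * κ ≤ N)
    (hM : 7 * N ≤ 8 * M) (hmax : 3 * max M₀ (M - M₀) ≤ 2 * N)
    (hmin : κ ≤ min M₀ (M - M₀)) (b : Fin κ → Bool) :
    dwor M M₀ κ b ≤ (8 / 9 : ℚ) ^ κ := by
  have hN₀ : (0 : ℚ) < N := by exact_mod_cast (by omega : 0 < N)
  have hM₀ : (M₀ : ℚ) ≤ 2 * N / 3 := by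
    rw [le_div_iff₀ three_pos]; exact_mod_cast (by omega : M₀ * 3 ≤ 2 * N)
  have hMM₀ : (M : ℚ) - M₀ ≤ 2 * N / 3 := by
    rw [le_div_iff₀ three_pos, ← Nat.cast_sub (by omega : M₀ ≤ M)]
    exact_mod_cast (by omega : (M - M₀) * 3 ≤ 2 * N)
  have hκM : 3 * N / 4 + (κ : ℚ) ≤ M := by
    have : (8 * κ : ℚ) ≤ N := by exact_mod_cast hN
    have : (7 * N : ℚ) ≤ 8 * M := by exact_mod_cast hM
    linarith
  calc dwor M M₀ κ b ≤ (2 * N / 3 / (3 * N / 4)) ^ κ :=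
        dwor_le_div_pow (by omega) (by omega) hM₀ hMM₀ (by positivity) hκM b
    _ = (8 / 9) ^ κ := by congr 1; field_simp; ring
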